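/- Let T > 0, let f : ℝ → ℝ be Lipschitz with constant L_f, and let u : [0,T] → ℝ² be measurable with |u(t)| ≤ 1 for a.e. t. Let ρ, ρ_n : [0,T] × ℝ² → ℝ (n ∈ ℕ) be bounded measurable functions such that for a.e. s the map x ↦ ρ(s,x) is Lipschitz with constant C(s), C : [0,T] → [0,∞) integrable, and suppose ∫₀ᵀ sup_{y∈ℝ²} |ρ(s,y) − ρ_n(s,y)| ds → 0 as n → ∞. Let x, x_n : [0,T] → ℝ² satisfy x(t) = x₀ + ∫₀ᵗ f(ρ(s,x(s))) u(s) ds and x_n(t) = x₀ + ∫₀ᵗ f(ρ_n(s,x_n(s))) u(s) ds for all t ∈ [0,T]. Then x_n converges to x uniformly on [0,T]. -/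

import Mathlib

/-!
Splitting `|ρₙ(s, xₙ) - ρ(s, x)|` at `ρ(s, xₙ)` and using the Lipschitz bound of `ρ(s, ·)` gives
`‖xₙ(t) - x(t)‖ ≤ L_f ∫₀ᵀ supᵧ |ρ - ρₙ| + ∫₀ᵗ L_f C ‖xₙ - x‖`. Grönwall's inequality with the
integrable coefficient `L_f C` (cut `[0, T]` into pieces on which `∫ L_f C ≤ 1/2`; across each piece
the bound at most doubles) then bounds `‖xₙ - x‖` on `[0, T]` by a fixed multiple of
`∫₀ᵀ supᵧ |ρ - ρₙ|`, which tends to `0`.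

The supremum `s ↦ supᵧ |ρ(s, y) - ρₙ(s, y)|` need not be Borel: its superlevel sets are projections
of Borel sets, hence analytic. Analytic sets are null-measurable (inner approximation by compact
sets, by the classical capacitability argument), so the supremum is integrable and the hypothesis on
its integral carries information.
-/

open MeasureTheory Set Filter Topology
open scoped ENNReal

theorem exists_measure_iUnion_lt_add {α : Type*} [MeasurableSpace α] {μ : Measure α}
    {s : ℕ → Set α} (hs : Monotone s) (hfin : μ (⋃ j, s j) ≠ ∞) {δ : ℝ≥0∞} (hδ : δ ≠ 0) :
    ∃ j, μ (⋃ j, s j) < μ (s j) + δ :=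
  (((tendsto_measure_iUnion_atTop hs).add_const δ).eventually
    (lt_mem_nhds (ENNReal.lt_add_right hfin hδ))).exists

theorem exists_measure_image_lt_add_inter_le {α : Type*} [MeasurableSpace α] (μ : Measure α)
    [IsFiniteMeasure μ] (f : (ℕ → ℕ) → α) (S : Set (ℕ → ℕ)) (k : ℕ) {δ : ℝ≥0∞} (hδ : δ ≠ 0) :
    ∃ j, μ (f '' S) < μ (f '' (S ∩ {σ | σ k ≤ j})) + δ := by
  have hmono : Monotone fun j => f '' (S ∩ {σ | σ k ≤ j}) := fun i j hij =>
    image_mono (inter_subset_inter_right _ fun σ hσ => le_trans hσ hij)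
  have hU : ⋃ j, f '' (S ∩ {σ | σ k ≤ j}) = f '' S := by
    rw [← image_iUnion, ← inter_iUnion, iUnion_eq_univ_iff.2 fun σ => ⟨σ k, le_refl (σ k)⟩,
      inter_univ]
  simpa only [hU] using exists_measure_iUnion_lt_add hmono (measure_ne_top _ _) hδ

section AnalyticSet

variable {α : Type*} [TopologicalSpace α]

theorem iInter_closure_image_subset_image_pi [T2Space α] [FirstCountableTopology α]
    {f : (ℕ → ℕ) → α} (hf : Continuous f) {F : ℕ → Set (ℕ → ℕ)} {ν : ℕ → ℕ}
    (hF : ∀ k, F k ⊆ {σ | ∀ i < k, σ i ≤ ν i}) :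
    ⋂ k, closure (f '' F k) ⊆ f '' univ.pi fun i => Iic (ν i) := by
  intro x hx
  obtain ⟨U, hU⟩ := (𝓝 x).exists_antitone_basis
  have hpick : ∀ k, ∃ σ ∈ F k, f σ ∈ U k := fun k => by
    obtain ⟨_, hxU, σ, hσ, rfl⟩ := mem_closure_iff_nhds.1 (mem_iInter.1 hx k) _ (hU.mem k)
    exact ⟨σ, hσ, hxU⟩
  choose σ hσF hσU using hpick
  -- Truncating at `ν` changes `σ k` only in coordinates `≥ k`, so it does not affect limits.
  obtain ⟨τ, hτ, φ, hφ, hlim⟩ :=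
    (isCompact_univ_pi fun i => (finite_Iic (ν i)).isCompact).tendsto_subseq
      (x := fun k i => min (σ k i) (ν i))
      fun k => mem_univ_pi.2 fun i => mem_Iic.2 (min_le_right _ _)
  have hσlim : Tendsto (fun k => σ (φ k)) atTop (𝓝 τ) := by
    refine tendsto_pi_nhds.2 fun i => (tendsto_pi_nhds.1 hlim i).congr' ?_
    filter_upwards [eventually_gt_atTop i] with k hk
    exact min_eq_left (hF _ (hσF (φ k)) i (hk.trans_le hφ.le_apply))
  exact ⟨τ, hτ, tendsto_nhds_unique ((hf.tendsto τ).comp hσlim)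
    ((hU.tendsto hσU).comp hφ.tendsto_atTop)⟩

variable [MeasurableSpace α]

theorem MeasureTheory.AnalyticSet.exists_isCompact_subset_measure_le_add [T2Space α]
    [FirstCountableTopology α] [OpensMeasurableSpace α] (μ : Measure α) [IsFiniteMeasure μ]
    {A : Set α} (hA : AnalyticSet A) {ε : ℝ≥0∞} (hε : ε ≠ 0) :
    ∃ K ⊆ A, IsCompact K ∧ μ A ≤ μ K + ε := by
  rw [AnalyticSet_def] at hA
  rcases hA with rfl | ⟨f, hf, rfl⟩
  · exact ⟨∅, subset_rfl, isCompact_empty, by simp⟩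
  obtain ⟨δ, hδ, hδε⟩ := ENNReal.exists_pos_sum_of_countable hε ℕ
  choose c hc using fun S k =>
    exists_measure_image_lt_add_inter_le μ f S k (ENNReal.coe_ne_zero.2 (hδ k).ne')
  -- `F k` bounds the first `k` coordinates, each bound chosen so as to lose at most `δ k`.
  let F : ℕ → Set (ℕ → ℕ) := fun k => Nat.rec univ (fun k S => S ∩ {σ | σ k ≤ c S k}) k
  let ν : ℕ → ℕ := fun k => c (F k) k
  have hF_anti : Antitone F := antitone_nat_of_succ_le fun k => inter_subset_left
  have hF_sub : ∀ k, F k ⊆ {σ | ∀ i < k, σ i ≤ ν i} := by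
    intro k
    induction k with
    | zero => simp
    | succ k ih =>
      rintro σ ⟨hσ, hσk⟩ i hi
      rcases Nat.lt_succ_iff_lt_or_eq.1 hi with hi | rfl
      exacts [ih hσ i hi, hσk]
  have hμF : ∀ k, μ (range f) ≤ μ (f '' F k) + ∑ i ∈ Finset.range k, (δ i : ℝ≥0∞) := by
    intro k
    induction k with
    | zero => simp [F, image_univ]
    | succ k ih =>
      rw [Finset.sum_range_succ, ← add_assoc, add_right_comm]
      exact ih.trans (by gcongr; exact (hc (F k) k).le)
  refine ⟨f '' univ.pi fun i => Iic (ν i), image_subset_range _ _,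
    (isCompact_univ_pi fun i => (finite_Iic (ν i)).isCompact).image hf, ?_⟩
  have hclosure : ∀ k, μ (range f) ≤ μ (closure (f '' F k)) + ε := fun k =>
    (hμF k).trans (add_le_add (measure_mono subset_closure)
      ((ENNReal.sum_le_tsum _).trans hδε.le))
  calc μ (range f) ≤ (⨅ k, μ (closure (f '' F k))) + ε := by
        rw [ENNReal.iInf_add]; exact le_iInf hclosure
    _ = μ (⋂ k, closure (f '' F k)) + ε := by
        rw [Antitone.measure_iInter (fun i j hij => closure_mono (image_mono (hF_anti hij)))
          (fun k => isClosed_closure.measurableSet.nullMeasurableSet) ⟨0, measure_ne_top _ _⟩]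
    _ ≤ _ := add_le_add_left (measure_mono (iInter_closure_image_subset_image_pi hf hF_sub)) _

theorem MeasureTheory.AnalyticSet.nullMeasurableSet [T2Space α] [FirstCountableTopology α]
    [OpensMeasurableSpace α] (μ : Measure α) [IsFiniteMeasure μ] {A : Set α}
    (hA : AnalyticSet A) : NullMeasurableSet A μ := by
  choose K hKA hK hμK using fun n : ℕ =>
    hA.exists_isCompact_subset_measure_le_add μ (ε := (n : ℝ≥0∞)⁻¹) (by simp)
  have hle : μ A ≤ μ (⋃ n, K n) := by
    refine ENNReal.le_of_forall_pos_le_add fun ε hε _ => ?_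
    obtain ⟨n, hn⟩ := ENNReal.exists_inv_nat_lt (a := ε) (by simpa using hε.ne')
    exact (hμK n).trans (add_le_add (measure_mono (subset_iUnion K n)) hn.le)
  have hG : MeasurableSet (⋃ n, K n) := .iUnion fun n => (hK n).isClosed.measurableSet
  exact hG.nullMeasurableSet.congr (ae_eq_of_subset_of_measure_ge (iUnion_subset hKA) hle
    hG.nullMeasurableSet (measure_ne_top _ _))

end AnalyticSet

theorem Measurable.nullMeasurable_ciSup {X Y : Type*} [TopologicalSpace X] [PolishSpace X]
    [MeasurableSpace X] [BorelSpace X] [TopologicalSpace Y] [PolishSpace Y] [MeasurableSpace Y]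
    [BorelSpace Y] [Nonempty Y] {g : X → Y → ℝ} (hg : Measurable (Function.uncurry g))
    (hbdd : ∀ x, BddAbove (range (g x))) (μ : Measure X) [IsFiniteMeasure μ] :
    NullMeasurable (fun x => ⨆ y, g x y) μ := by
  have hproj : ∀ a, (fun x => ⨆ y, g x y) ⁻¹' Ioi a =
      Prod.fst '' {p | a < Function.uncurry g p} := fun a => by
    ext x
    simp [lt_ciSup_iff (hbdd x)]
  have hnull : ∀ a, NullMeasurableSet ((fun x => ⨆ y, g x y) ⁻¹' Ioi a) μ := fun a =>
    hproj a ▸ ((measurableSet_lt measurable_const hg).analyticSet.image_of_continuous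
      continuous_fst).nullMeasurableSet μ
  exact measurable_of_Ioi hnull

theorem le_two_pow_mul_of_le_add_mul_sub {ψ Φ : ℝ → ℝ} {a T : ℝ}
    (hΦ : ContinuousOn Φ (Icc 0 T)) (hΦ0 : Φ 0 = 0) (hψ0 : ψ 0 = a)
    (hψ : ∀ t ∈ Icc 0 T, 0 ≤ ψ t)
    (hstep : ∀ u ∈ Icc 0 T, ∀ t ∈ Icc 0 T, u ≤ t → ψ t ≤ ψ u + ψ t * (Φ t - Φ u)) :
    ∀ j : ℕ, ∀ t ∈ Icc 0 T, Φ t ≤ j / 2 → ψ t ≤ 2 ^ j * a := by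
  intro j
  induction j with
  | zero =>
    intro t ht hΦt
    have := hstep 0 ⟨le_rfl, ht.1.trans ht.2⟩ t ht ht.1
    rw [hψ0, hΦ0] at this
    nlinarith [hψ t ht]
  | succ j ih =>
    intro t ht hΦt
    have ha : 0 ≤ a := hψ0 ▸ hψ 0 ⟨le_rfl, ht.1.trans ht.2⟩
    by_cases hΦj : Φ t ≤ j / 2
    · calc ψ t ≤ 2 ^ j * a := ih t ht hΦj
        _ ≤ 2 ^ (j + 1) * a := by gcongr <;> norm_num
    -- Cut `[0, t]` where `Φ` crosses `j / 2`; on the remaining piece `Φ` grows by at most `1 / 2`.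
    obtain ⟨u, hu, hΦu⟩ := intermediate_value_Icc ht.1 (hΦ.mono (Icc_subset_Icc le_rfl ht.2))
      ⟨by rw [hΦ0]; positivity, (not_le.1 hΦj).le⟩
    have huT : u ∈ Icc 0 T := ⟨hu.1, hu.2.trans ht.2⟩
    have := hstep u huT t ht hu.2
    have hψu := ih u huT hΦu.le
    push_cast at hΦt
    rw [pow_succ]
    nlinarith [hψ t ht]

theorem le_add_mul_integral_of_le_add_integral {K g : ℝ → ℝ} {a T u t : ℝ}
    (hK0 : ∀ s, 0 ≤ K s) (hg0 : ∀ s, 0 ≤ g s) (hK : IntervalIntegrable K volume 0 T)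
    (hKg : IntervalIntegrable (fun s => K s * g s) volume 0 T)
    (hle : ∀ t ∈ Icc 0 T, g t ≤ a + ∫ s in 0..t, K s * g s)
    (hu : u ∈ Icc 0 T) (ht : t ∈ Icc 0 T) (hut : u ≤ t) :
    a + ∫ s in 0..t, K s * g s ≤
      (a + ∫ s in 0..u, K s * g s) + (a + ∫ s in 0..t, K s * g s) * ∫ s in u..t, K s := by
  have hsub : ∀ {v w}, v ∈ Icc 0 T → w ∈ Icc 0 T → uIcc v w ⊆ uIcc 0 T := fun hv hw =>
    uIcc_subset_uIcc (Icc_subset_uIcc hv) (Icc_subset_uIcc hw)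
  have h0 : (0 : ℝ) ∈ Icc 0 T := ⟨le_rfl, hu.1.trans hu.2⟩
  have hsplit : ∀ {v w}, v ∈ Icc 0 T → w ∈ Icc 0 T → ∫ s in 0..w, K s * g s =
      (∫ s in 0..v, K s * g s) + ∫ s in v..w, K s * g s := fun hv hw => by
    rw [← intervalIntegral.integral_interval_sub_left (hKg.mono_set (hsub h0 hw))
      (hKg.mono_set (hsub h0 hv))]
    ring
  have hmem : ∀ s ∈ Icc u t, s ∈ Icc (0 : ℝ) T := fun s hs => ⟨hu.1.trans hs.1, hs.2.trans ht.2⟩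
  have hg_le : ∀ s ∈ Icc u t, g s ≤ a + ∫ s in 0..t, K s * g s := fun s hs => by
    refine (hle s (hmem s hs)).trans ?_
    rw [hsplit (hmem s hs) ht, ← add_assoc, le_add_iff_nonneg_right]
    exact intervalIntegral.integral_nonneg hs.2 fun r _ => mul_nonneg (hK0 r) (hg0 r)
  calc a + ∫ s in 0..t, K s * g s = (a + ∫ s in 0..u, K s * g s) + ∫ s in u..t, K s * g s := by
        rw [hsplit hu ht, add_assoc]
    _ ≤ (a + ∫ s in 0..u, K s * g s) + ∫ s in u..t, K s * (a + ∫ s in 0..t, K s * g s) := by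
        gcongr
        exact intervalIntegral.integral_mono_on hut (hKg.mono_set (hsub hu ht))
          ((hK.mono_set (hsub hu ht)).mul_const _)
          fun s hs => mul_le_mul_of_nonneg_left (hg_le s hs) (hK0 s)
    _ = _ := by rw [intervalIntegral.integral_mul_const, mul_comm]

theorem le_two_pow_mul_of_le_add_integral {K g : ℝ → ℝ} {a T : ℝ} {m : ℕ}
    (hK0 : ∀ s, 0 ≤ K s) (hg0 : ∀ s, 0 ≤ g s) (hK : IntervalIntegrable K volume 0 T)
    (hKg : IntervalIntegrable (fun s => K s * g s) volume 0 T) (hm : ∫ s in 0..T, K s ≤ m / 2)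
    (hle : ∀ t ∈ Icc 0 T, g t ≤ a + ∫ s in 0..t, K s * g s) :
    ∀ t ∈ Icc 0 T, g t ≤ 2 ^ m * a := by
  have hΦ : ∀ {u t}, u ∈ Icc 0 T → t ∈ Icc 0 T →
      (∫ s in 0..t, K s) - ∫ s in 0..u, K s = ∫ s in u..t, K s := fun hu ht =>
    intervalIntegral.integral_interval_sub_left
      (hK.mono_set (uIcc_subset_uIcc_left (Icc_subset_uIcc ht)))
      (hK.mono_set (uIcc_subset_uIcc_left (Icc_subset_uIcc hu)))
  have hclaim := le_two_pow_mul_of_le_add_mul_sub (a := a) (Φ := fun t => ∫ s in 0..t, K s)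
    (ψ := fun t => a + ∫ s in 0..t, K s * g s)
    ((intervalIntegral.continuousOn_primitive_interval' hK left_mem_uIcc).mono Icc_subset_uIcc)
    (by simp) (by simp) (fun t ht => (hg0 t).trans (hle t ht))
    fun u hu t ht hut => by
      simpa only [hΦ hu ht] using
        le_add_mul_integral_of_le_add_integral hK0 hg0 hK hKg hle hu ht hut
  intro t ht
  refine (hle t ht).trans (hclaim m t ht ?_)
  have := hΦ ht ⟨ht.1.trans ht.2, le_rfl⟩
  have := intervalIntegral.integral_nonneg (μ := volume) ht.2 fun s _ => hK0 s
  linarith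

theorem bddAbove_range_abs_sub {Y : Type*} {ρ ρ' : Y → ℝ} {M : ℝ} (hρ : ∀ y, |ρ y| ≤ M)
    (hρ' : ∀ y, |ρ' y| ≤ M) : BddAbove (range fun y => |ρ y - ρ' y|) :=
  ⟨2 * M, forall_mem_range.2 fun y => (abs_sub _ _).trans (by linarith [hρ y, hρ' y])⟩

theorem intervalIntegrable_ciSup_abs_sub {Y : Type*} [TopologicalSpace Y] [PolishSpace Y]
    [MeasurableSpace Y] [BorelSpace Y] [Nonempty Y] {ρ ρ' : ℝ → Y → ℝ}
    (hρ : Measurable (Function.uncurry ρ)) (hρ' : Measurable (Function.uncurry ρ')) {M : ℝ}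
    (hρM : ∀ s y, |ρ s y| ≤ M) (hρ'M : ∀ s y, |ρ' s y| ≤ M) (a b : ℝ) :
    IntervalIntegrable (fun s => ⨆ y, |ρ s y - ρ' s y|) volume a b := by
  have hbdd := fun s => bddAbove_range_abs_sub (hρM s) (hρ'M s)
  refine ⟨?_, ?_⟩ <;>
  refine Integrable.of_bound
    (Measurable.nullMeasurable_ciSup (hρ.sub hρ').abs hbdd _).aemeasurable.aestronglyMeasurable
    (2 * M) (ae_of_all _ fun s => ?_) <;>
  · rw [Real.norm_eq_abs,
      abs_of_nonneg ((abs_nonneg _).trans (le_ciSup (hbdd s) (Classical.arbitrary Y)))]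
    exact ciSup_le fun y => (abs_sub _ _).trans (by linarith [hρM s y, hρ'M s y])

theorem abs_comp_sub_comp_le {E : Type*} [SeminormedAddCommGroup E] {f : ℝ → ℝ} {L c : ℝ}
    {ρ ρ' : E → ℝ} (hL : 0 ≤ L) (hf : ∀ a b, |f a - f b| ≤ L * |a - b|)
    (hρ : ∀ y z, |ρ y - ρ z| ≤ c * ‖y - z‖) (hbdd : BddAbove (range fun y => |ρ y - ρ' y|))
    (y y' : E) :
    |f (ρ' y') - f (ρ y)| ≤ L * ((⨆ z, |ρ z - ρ' z|) + c * ‖y' - y‖) := by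
  refine (hf _ _).trans (mul_le_mul_of_nonneg_left ?_ hL)
  calc |ρ' y' - ρ y| ≤ |ρ' y' - ρ y'| + |ρ y' - ρ y| := abs_sub_le _ _ _
    _ ≤ _ := add_le_add (abs_sub_comm (ρ' y') _ ▸ le_ciSup hbdd y') (hρ y' y)

section Trajectories

variable {E : Type*} [NormedAddCommGroup E] [NormedSpace ℝ E]

theorem continuousOn_of_eq_add_integral {F z : ℝ → E} {z₀ : E} {T : ℝ} (hT : 0 ≤ T)
    (hF : IntervalIntegrable F volume 0 T) (hz : ∀ t ∈ Icc 0 T, z t = z₀ + ∫ s in 0..t, F s) :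
    ContinuousOn z (Icc 0 T) := by
  rw [← uIcc_of_le hT] at hz ⊢
  exact (continuousOn_const.add
    (intervalIntegral.continuousOn_primitive_interval' hF left_mem_uIcc)).congr hz

theorem norm_sub_le_integral_of_eq_add_integral {F G z w : ℝ → E} {z₀ : E} {e : ℝ → ℝ} {T : ℝ}
    (hF : IntervalIntegrable F volume 0 T) (hG : IntervalIntegrable G volume 0 T)
    (he : IntervalIntegrable e volume 0 T)
    (hz : ∀ t ∈ Icc 0 T, z t = z₀ + ∫ s in 0..t, F s)
    (hw : ∀ t ∈ Icc 0 T, w t = z₀ + ∫ s in 0..t, G s)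
    (hFG : ∀ᵐ s ∂(volume.restrict (Icc 0 T)), ‖F s - G s‖ ≤ e s) :
    ∀ t ∈ Icc 0 T, ‖z t - w t‖ ≤ ∫ s in 0..t, e s := by
  intro t ht
  have hsub : uIcc 0 t ⊆ uIcc 0 T := uIcc_subset_uIcc_left (Icc_subset_uIcc ht)
  rw [hz t ht, hw t ht, add_sub_add_left_eq_sub,
    ← intervalIntegral.integral_sub (hF.mono_set hsub) (hG.mono_set hsub)]
  refine (intervalIntegral.norm_integral_le_integral_norm ht.1).trans
    (intervalIntegral.integral_mono_ae_restrict ht.1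
      ((hF.mono_set hsub).sub (hG.mono_set hsub)).norm (he.mono_set hsub) ?_)
  exact ae_restrict_of_ae_restrict_of_subset (Icc_subset_Icc le_rfl ht.2) hFG

theorem norm_trajectory_sub_le {T L : ℝ} (hL : 0 ≤ L) {f : ℝ → ℝ}
    (hf : ∀ a b, |f a - f b| ≤ L * |a - b|) {u : ℝ → E}
    (hu : ∀ᵐ t ∂(volume.restrict (Icc 0 T)), ‖u t‖ ≤ 1) {ρ ρ' : ℝ → E → ℝ} {C : ℝ → ℝ}
    (hρ : ∀ᵐ s ∂(volume.restrict (Icc 0 T)), ∀ y z, |ρ s y - ρ s z| ≤ C s * ‖y - z‖)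
    (hbdd : ∀ s, BddAbove (range fun y => |ρ s y - ρ' s y|))
    (hD : IntervalIntegrable (fun s => ⨆ y, |ρ s y - ρ' s y|) volume 0 T)
    {x₀ : E} {x x' : ℝ → E}
    (hx_int : IntervalIntegrable (fun s => f (ρ s (x s)) • u s) volume 0 T)
    (hx'_int : IntervalIntegrable (fun s => f (ρ' s (x' s)) • u s) volume 0 T)
    (hx : ∀ t ∈ Icc 0 T, x t = x₀ + ∫ s in 0..t, f (ρ s (x s)) • u s)
    (hx' : ∀ t ∈ Icc 0 T, x' t = x₀ + ∫ s in 0..t, f (ρ' s (x' s)) • u s)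
    (hKg : IntervalIntegrable (fun s => L * C s * ‖x' s - x s‖) volume 0 T) :
    ∀ t ∈ Icc 0 T, ‖x' t - x t‖ ≤
      L * (∫ s in 0..T, ⨆ y, |ρ s y - ρ' s y|) + ∫ s in 0..t, L * C s * ‖x' s - x s‖ := by
  intro t ht
  have hest := norm_sub_le_integral_of_eq_add_integral hx'_int hx_int ((hD.const_mul L).add hKg)
    hx' hx (by
      filter_upwards [hu, hρ] with s hus hρs
      rw [← sub_smul, norm_smul, Real.norm_eq_abs, mul_assoc, ← mul_add]
      exact (mul_le_of_le_one_right (abs_nonneg _) hus).trans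
        (abs_comp_sub_comp_le hL hf hρs (hbdd s) _ _)) t ht
  have hsub : uIcc 0 t ⊆ uIcc 0 T := uIcc_subset_uIcc_left (Icc_subset_uIcc ht)
  rw [intervalIntegral.integral_add ((hD.const_mul L).mono_set hsub) (hKg.mono_set hsub),
    intervalIntegral.integral_const_mul] at hest
  refine hest.trans (add_le_add_left (mul_le_mul_of_nonneg_left ?_ hL) _)
  exact intervalIntegral.integral_mono_interval le_rfl ht.1 ht.2
    (ae_of_all _ fun s => (abs_nonneg _).trans (le_ciSup (hbdd s) 0)) hD

end Trajectories

theorem stmt_6_general (T : ℝ) (hT : 0 < T) (L_f : ℝ) (hLf : 0 ≤ L_f)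
    (f : ℝ → ℝ) (hf : ∀ a b : ℝ, |f a - f b| ≤ L_f * |a - b|)
    (u : ℝ → EuclideanSpace ℝ (Fin 2))
    (hu : ∀ᵐ t ∂(volume.restrict (Icc (0:ℝ) T)), ‖u t‖ ≤ 1)
    (ρ : ℝ → EuclideanSpace ℝ (Fin 2) → ℝ)
    (ρn : ℕ → ℝ → EuclideanSpace ℝ (Fin 2) → ℝ)
    (hρ_meas : Measurable (Function.uncurry ρ))
    (hρn_meas : ∀ n, Measurable (Function.uncurry (ρn n)))
    (M : ℝ) (hρ_bdd : ∀ s y, |ρ s y| ≤ M) (hρn_bdd : ∀ n s y, |ρn n s y| ≤ M)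
    (C : ℝ → ℝ) (hC_nonneg : ∀ s, 0 ≤ C s) (hC_int : IntegrableOn C (Icc 0 T))
    (hρ_lip : ∀ᵐ s ∂(volume.restrict (Icc (0:ℝ) T)),
      ∀ y z : EuclideanSpace ℝ (Fin 2), |ρ s y - ρ s z| ≤ C s * ‖y - z‖)
    (hconv : Tendsto
      (fun n => ∫ s in (0:ℝ)..T, ⨆ y : EuclideanSpace ℝ (Fin 2), |ρ s y - ρn n s y|)
      atTop (nhds 0))
    (x₀ : EuclideanSpace ℝ (Fin 2))
    (x : ℝ → EuclideanSpace ℝ (Fin 2)) (xn : ℕ → ℝ → EuclideanSpace ℝ (Fin 2))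
    (hx_int : IntervalIntegrable (fun s => f (ρ s (x s)) • u s) volume 0 T)
    (hxn_int : ∀ n, IntervalIntegrable (fun s => f (ρn n s (xn n s)) • u s) volume 0 T)
    (hx : ∀ t ∈ Icc (0:ℝ) T, x t = x₀ + ∫ s in (0:ℝ)..t, f (ρ s (x s)) • u s)
    (hxn : ∀ n, ∀ t ∈ Icc (0:ℝ) T,
      xn n t = x₀ + ∫ s in (0:ℝ)..t, f (ρn n s (xn n s)) • u s) :
    TendstoUniformlyOn xn x atTop (Icc (0:ℝ) T) := by
  have hK : IntervalIntegrable (fun s => L_f * C s) volume 0 T :=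
    ((intervalIntegrable_iff_integrableOn_Icc_of_le hT.le).2 hC_int).const_mul L_f
  have hKg : ∀ n, IntervalIntegrable (fun s => L_f * C s * ‖xn n s - x s‖) volume 0 T := by
    intro n
    refine hK.mul_continuousOn ?_
    rw [uIcc_of_le hT.le]
    exact ((continuousOn_of_eq_add_integral hT.le (hxn_int n) (hxn n)).sub
      (continuousOn_of_eq_add_integral hT.le hx_int hx)).norm
  obtain ⟨m, hm⟩ := exists_nat_ge (2 * ∫ s in 0..T, L_f * C s)
  have hbound : ∀ n, ∀ t ∈ Icc 0 T, ‖xn n t - x t‖ ≤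
      2 ^ m * (L_f * ∫ s in 0..T, ⨆ y, |ρ s y - ρn n s y|) := fun n =>
    le_two_pow_mul_of_le_add_integral (fun s => mul_nonneg hLf (hC_nonneg s))
      (fun s => norm_nonneg _) hK (hKg n) (by linarith)
      (norm_trajectory_sub_le hLf hf hu hρ_lip
        (fun s => bddAbove_range_abs_sub (hρ_bdd s) (hρn_bdd n s))
        (intervalIntegrable_ciSup_abs_sub hρ_meas (hρn_meas n) hρ_bdd (hρn_bdd n) 0 T)
        hx_int (hxn_int n) hx (hxn n) (hKg n))
  have hlim : Tendsto (fun n => 2 ^ m * (L_f * ∫ s in 0..T, ⨆ y, |ρ s y - ρn n s y|)) atTop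
      (𝓝 0) := by
    simpa using (hconv.const_mul L_f).const_mul (2 ^ m)
  refine Metric.tendstoUniformlyOn_iff.2 fun ε hε => ?_
  filter_upwards [hlim.eventually (gt_mem_nhds hε)] with n hn t ht
  rw [dist_comm, dist_eq_norm]
  exact (hbound n t ht).trans_lt hn

/-- Convergence of the regularized agent trajectories (Step 3 of the proof of Theorem 3.8):
if the approximating densities `ρ_n` converge to `ρ` in an `L¹`-in-time, uniform-in-space
sense, then the corresponding trajectories converge uniformly on `[0,T]`. -/
theorem stmt_6 (T : ℝ) (hT : 0 < T) (L_f : ℝ) (hLf : 0 ≤ L_f)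
    (f : ℝ → ℝ) (hf : ∀ a b : ℝ, |f a - f b| ≤ L_f * |a - b|)
    (u : ℝ → EuclideanSpace ℝ (Fin 2)) (hu_meas : Measurable u)
    (hu : ∀ᵐ t ∂(volume.restrict (Icc (0:ℝ) T)), ‖u t‖ ≤ 1)
    (ρ : ℝ → EuclideanSpace ℝ (Fin 2) → ℝ)
    (ρn : ℕ → ℝ → EuclideanSpace ℝ (Fin 2) → ℝ)
    (hρ_meas : Measurable (Function.uncurry ρ))
    (hρn_meas : ∀ n, Measurable (Function.uncurry (ρn n)))
    (M : ℝ) (hρ_bdd : ∀ s y, |ρ s y| ≤ M) (hρn_bdd : ∀ n s y, |ρn n s y| ≤ M)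
    (C : ℝ → ℝ) (hC_nonneg : ∀ s, 0 ≤ C s) (hC_int : IntegrableOn C (Icc 0 T))
    (hρ_lip : ∀ᵐ s ∂(volume.restrict (Icc (0:ℝ) T)),
      ∀ y z : EuclideanSpace ℝ (Fin 2), |ρ s y - ρ s z| ≤ C s * ‖y - z‖)
    (hconv : Tendsto
      (fun n => ∫ s in (0:ℝ)..T, ⨆ y : EuclideanSpace ℝ (Fin 2), |ρ s y - ρn n s y|)
      atTop (nhds 0))
    (x₀ : EuclideanSpace ℝ (Fin 2))
    (x : ℝ → EuclideanSpace ℝ (Fin 2)) (xn : ℕ → ℝ → EuclideanSpace ℝ (Fin 2))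
    (hx_int : IntervalIntegrable (fun s => f (ρ s (x s)) • u s) volume 0 T)
    (hxn_int : ∀ n, IntervalIntegrable (fun s => f (ρn n s (xn n s)) • u s) volume 0 T)
    (hx : ∀ t ∈ Icc (0:ℝ) T, x t = x₀ + ∫ s in (0:ℝ)..t, f (ρ s (x s)) • u s)
    (hxn : ∀ n, ∀ t ∈ Icc (0:ℝ) T,
      xn n t = x₀ + ∫ s in (0:ℝ)..t, f (ρn n s (xn n s)) • u s) :
    TendstoUniformlyOn xn x atTop (Icc (0:ℝ) T) :=
  stmt_6_general T hT L_f hLf f hf u hu ρ ρn hρ_meas hρn_meas M hρ_bdd hρn_bdd C hC_nonneg hC_int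
    hρ_lip hconv x₀ x xn hx_int hxn_int hx hxn
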